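/- Assume k − 1 ≤ LR and fix 1 ≤ j ≤ k. Then MC(π^(j)) ≤ MC(π) for every selected node distribution s with s_0 = 1 and every cluster order π ∈ Π(s) whose unique separate entry is at position j (π_j = 0). In other words, when one separate selected node is fixed at location j, the cluster order produced by Algorithms 1 and 2 minimizes the min-cut. -/

import Mathlib

/-- Relative location `h_π(i) = #{1 ≤ j ≤ i : π j = π i}`. -/
def relLoc (π : ℕ → ℕ) (i : ℕ) : ℕ :=
  ((Finset.Icc 1 i).filter (fun j => π j = π i)).card

/-- Intra-cluster coefficient `a_i(π) = d_I + 1 − h_π(i)` (truncated subtraction). -/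
def aCoef (dI : ℕ) (π : ℕ → ℕ) (i : ℕ) : ℕ :=
  dI + 1 - relLoc π i

/-- Cross-cluster coefficient `b_i(π) = max(0, d_C − (i − h_π(i)))` (truncated subtraction). -/
def bCoef (dC : ℕ) (π : ℕ → ℕ) (i : ℕ) : ℕ :=
  dC - (i - relLoc π i)

/-- Part incoming weight `w_i(π)`: for a separate position (`π i = 0`) it is
`(d_I + d_C + 1 − i)·β_C`, otherwise `a_i(π)·β_I + b_i(π)·β_C`. -/
noncomputable def weight (dI dC : ℕ) (βI βC : ℝ) (π : ℕ → ℕ) (i : ℕ) : ℝ :=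
  if π i = 0 then ((dI + dC + 1 - i : ℕ) : ℝ) * βC
  else (aCoef dI π i : ℝ) * βI + (bCoef dC π i : ℝ) * βC

/-- Min-cut `MC(π) = Σ_{i=1}^k min(α, w_i(π))`. -/
noncomputable def MC (k dI dC : ℕ) (βI βC α : ℝ) (π : ℕ → ℕ) : ℝ :=
  ∑ i ∈ Finset.Icc 1 k, min α (weight dI dC βI βC π i)

/-- A cluster order: a `k`-tuple with entries in `{0, 1, …, L}`. -/
def IsClusterOrder (L k : ℕ) (π : ℕ → ℕ) : Prop :=
  ∀ i, 1 ≤ i → i ≤ k → π i ≤ L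

/-- A selected node distribution `(s_0, s_1, …, s_L)`:
`R ≥ s_1 ≥ s_2 ≥ … ≥ s_L` and `s_0 + s_1 + … + s_L = k`. -/
def IsDist (L R k : ℕ) (s : ℕ → ℕ) : Prop :=
  (∀ i, 1 ≤ i → i + 1 ≤ L → s (i + 1) ≤ s i) ∧
  (∀ i, 1 ≤ i → i ≤ L → s i ≤ R) ∧
  ∑ i ∈ Finset.range (L + 1), s i = k

/-- `π ∈ Π(s)`: `π` is a cluster order with `#{1 ≤ j ≤ k : π j = c} = s c` for all `0 ≤ c ≤ L`. -/
def MemPi (L k : ℕ) (s : ℕ → ℕ) (π : ℕ → ℕ) : Prop :=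
  IsClusterOrder L k π ∧
  ∀ c, c ≤ L → ((Finset.Icc 1 k).filter (fun j => π j = c)).card = s c

/-- Vertical order of distribution `s` (possibly with separate entries, whose positions are
not constrained here):  over the cluster positions (`π i ≠ 0`) in increasing order, relative
locations are nondecreasing, with ties broken by increasing cluster index. -/
def IsVerticalOrder (L k : ℕ) (s : ℕ → ℕ) (π : ℕ → ℕ) : Prop :=
  MemPi L k s π ∧
  ∀ i j, 1 ≤ i → i < j → j ≤ k → π i ≠ 0 → π j ≠ 0 →
    relLoc π i ≤ relLoc π j ∧ (relLoc π i = relLoc π j → π i < π j)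

/-- The distribution `s*` (no separate node): `s*_0 = 0`, `s*_i = R` for `1 ≤ i ≤ ⌊k/R⌋`,
`s*_{⌊k/R⌋+1} = k − ⌊k/R⌋·R`, and `0` beyond. -/
def sStar0 (R k : ℕ) : ℕ → ℕ := fun i =>
  if i = 0 then 0
  else if i ≤ k / R then R
  else if i = k / R + 1 then k - k / R * R
  else 0

/-- The distribution with one separate node: `s_0 = 1`, `s_i = R` for `1 ≤ i ≤ ⌊(k−1)/R⌋`,
`s_{⌊(k−1)/R⌋+1} = (k−1) − ⌊(k−1)/R⌋·R`, and `0` beyond. -/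
def sStar1 (R k : ℕ) : ℕ → ℕ := fun i =>
  if i = 0 then 1
  else if i ≤ (k - 1) / R then R
  else if i = (k - 1) / R + 1 then (k - 1) - (k - 1) / R * R
  else 0

/-- `π^(j)`: the cluster order with exactly one separate entry, located at position `j`,
whose cluster entries form the vertical order of the distribution `sStar1 R k`. -/
def IsPiJ (L R k j : ℕ) (π : ℕ → ℕ) : Prop :=
  π j = 0 ∧ IsVerticalOrder L k (sStar1 R k) π

/-! At a cluster position `i` of relative location `h`, the capped weight `min α w` telescopes as
`F i 1 - ∑_{v < h} D i v` with drops `D i v = F i v - F i (v + 1)`. Hence, once the separate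
node sits at `j`, `MC σ` is a constant minus `∑_v ∑_{i ≠ j, h_σ(i) > v} D i v`. For fixed `v` the
drops are nonnegative and nondecreasing in the position `i` (concavity of `min α`, and the
cross-cluster part of the weight decays with `i`), so the inner sum grows when the set
`{i : h(i) > v}` gets larger or moves right. The vertical order of the greedy distribution does
both: it has the largest possible number `∑_c (s_c - v)⁺` of such positions among distributions
with `s_c ≤ R` and `∑ s_c = k - 1`, and it places all of them to the right of the positions
with `h ≤ v`. -/

open Finset

theorem Finset.sum_le_sum_of_card_le_of_le_of_mem_sdiff {ι M : Type*} [DecidableEq ι]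
    [AddCommMonoid M] [LinearOrder M] [IsOrderedAddMonoid M] {B U : Finset ι} {f : ι → M}
    (hcard : #B ≤ #U) (hf : ∀ u ∈ U \ B, 0 ≤ f u)
    (hle : ∀ b ∈ B \ U, ∀ u ∈ U \ B, f b ≤ f u) :
    ∑ b ∈ B, f b ≤ ∑ u ∈ U, f u := by
  rw [← sum_inter_add_sum_sdiff B U f, ← sum_inter_add_sum_sdiff U B f, inter_comm]
  refine add_le_add_right ?_ _
  have hcard' : #(B \ U) ≤ #(U \ B) := card_sdiff_le_card_sdiff_iff.mpr hcard
  obtain hBU | ⟨b, hb⟩ := (B \ U).eq_empty_or_nonempty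
  · rw [hBU, sum_empty]
    exact sum_nonneg hf
  have hUB : (U \ B).Nonempty := card_pos.mp ((card_pos.mpr ⟨b, hb⟩).trans_le hcard')
  calc ∑ b ∈ B \ U, f b ≤ #(B \ U) • (U \ B).inf' hUB f :=
        sum_le_card_nsmul _ _ _ fun b hb => le_inf' _ _ fun u hu => hle b hb u hu
    _ ≤ #(U \ B) • (U \ B).inf' hUB f := nsmul_le_nsmul_left (le_inf' _ _ hf) hcard'
    _ ≤ ∑ u ∈ U \ B, f u := card_nsmul_le_sum _ _ _ fun u hu => inf'_le f hu

theorem min_sub_min_le_min_sub_min {K : Type*} [Field K] [LinearOrder K] [IsStrictOrderedRing K]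
    {a p q p' q' : K} (hqp : q ≤ p) (hq'q : q' ≤ q)
    (hgap : p - q ≤ p' - q') : min a p - min a q ≤ min a p' - min a q' := by
  simp only [min_def]
  split_ifs <;> linarith

theorem Nat.sum_tsub_le_of_le_of_sum_le {ι : Type*} {S : Finset ι} {f : ι → ℕ} {R n : ℕ}
    (hf : ∀ c ∈ S, f c ≤ R) (hsum : ∑ c ∈ S, f c ≤ n) (w : ℕ) :
    ∑ c ∈ S, (f c - w) ≤ n / R * (R - w) + (n % R - w) := by
  set Q := {c ∈ S | w ≤ f c}
  have hQ : ∑ c ∈ S, (f c - w) = ∑ c ∈ Q, (f c - w) :=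
    (sum_filter_of_ne fun c _ h => by omega).symm
  rw [hQ]
  rcases le_or_gt #Q (n / R) with hq | hq
  · calc ∑ c ∈ Q, (f c - w) ≤ #Q • (R - w) :=
          sum_le_card_nsmul _ _ _ fun c hc => Nat.sub_le_sub_right (hf c (mem_filter.mp hc).1) w
      _ ≤ n / R * (R - w) := Nat.mul_le_mul_right _ hq
      _ ≤ _ := Nat.le_add_right _ _
  · have hQsum : ∑ c ∈ Q, (f c - w) + #Q * w ≤ n := by
      rw [← smul_eq_mul, ← sum_const, ← sum_add_distrib,
        sum_congr rfl fun c hc => Nat.sub_add_cancel (mem_filter.mp hc).2]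
      exact (sum_le_sum_of_subset (filter_subset _ S)).trans hsum
    have := Nat.mod_add_div' n R
    have := Nat.mul_sub (n / R) R w
    have := Nat.mul_le_mul_right w hq
    rw [Nat.succ_mul] at this
    omega

theorem one_le_relLoc (π : ℕ → ℕ) {i : ℕ} (hi : 1 ≤ i) : 1 ≤ relLoc π i :=
  card_pos.mpr ⟨i, by simp [hi]⟩

theorem relLoc_le_self (π : ℕ → ℕ) (i : ℕ) : relLoc π i ≤ i :=
  (card_filter_le _ _).trans (by simp)

theorem relLoc_lt_relLoc (π : ℕ → ℕ) {i i' : ℕ} (hii' : i < i') (h : π i = π i') :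
    relLoc π i < relLoc π i' := by
  apply card_lt_card
  rw [ssubset_iff_of_subset]
  · refine ⟨i', ?_, ?_⟩
    · simp only [mem_filter, mem_Icc, and_true]
      omega
    · simp only [mem_filter, mem_Icc]
      omega
  · intro x
    simp only [mem_filter, mem_Icc]
    omega

theorem relLoc_le_card_filter (π : ℕ → ℕ) {i k : ℕ} (hik : i ≤ k) :
    relLoc π i ≤ #{x ∈ Icc 1 k | π x = π i} :=
  card_le_card fun x => by simp only [mem_filter, mem_Icc]; omega

theorem card_filter_eq_and_lt_relLoc (π : ℕ → ℕ) (k c v : ℕ) :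
    #{i ∈ Icc 1 k | π i = c ∧ v < relLoc π i} = #{i ∈ Icc 1 k | π i = c} - v := by
  set P := {i ∈ Icc 1 k | π i = c}
  have hinj : Set.InjOn (relLoc π) P := by
    refine StrictMonoOn.injOn fun a ha b hb hab => relLoc_lt_relLoc π hab ?_
    simp only [P, coe_filter, Set.mem_ofPred_eq] at ha hb
    rw [ha.2, hb.2]
  have himage : P.image (relLoc π) = Icc 1 #P := by
    refine eq_of_subset_of_card_le (fun y hy => ?_) ?_
    · obtain ⟨i, hi, rfl⟩ := mem_image.mp hy
      simp only [P, mem_filter, mem_Icc] at hi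
      have := relLoc_le_card_filter π hi.1.2
      rw [hi.2] at this
      exact mem_Icc.mpr ⟨one_le_relLoc π hi.1.1, this⟩
    · rw [card_image_of_injOn hinj, Nat.card_Icc, Nat.add_sub_cancel]
  calc #{i ∈ Icc 1 k | π i = c ∧ v < relLoc π i} = #{i ∈ P | v < relLoc π i} := by
        rw [filter_filter]
    _ = #({i ∈ P | v < relLoc π i}.image (relLoc π)) :=
        (card_image_of_injOn (hinj.mono (filter_subset _ _))).symm
    _ = #P - v := by
        rw [← filter_image, himage, ← Nat.card_Ioc v #P]
        congr 1
        ext y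
        simp only [mem_filter, mem_Icc, mem_Ioc]
        omega

section MemPi

variable {L k : ℕ} {t σ : ℕ → ℕ} {j : ℕ}

theorem MemPi.eq_of_apply_eq_zero (hσ : MemPi L k t σ) (ht0 : t 0 = 1) (hj : j ∈ Icc 1 k)
    (hσj : σ j = 0) {i : ℕ} (hi : i ∈ Icc 1 k) (hσi : σ i = 0) : i = j :=
  card_le_one.mp ((hσ.2 0 (Nat.zero_le L)).trans ht0).le i (mem_filter.mpr ⟨hi, hσi⟩) j
    (mem_filter.mpr ⟨hj, hσj⟩)

theorem MemPi.apply_ne_zero (hσ : MemPi L k t σ) (ht0 : t 0 = 1) (hj : j ∈ Icc 1 k)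
    (hσj : σ j = 0) {i : ℕ} (hi : i ∈ (Icc 1 k).erase j) : σ i ≠ 0 := fun h =>
  (mem_erase.mp hi).1 (hσ.eq_of_apply_eq_zero ht0 hj hσj (mem_erase.mp hi).2 h)

theorem MemPi.relLoc_le {R : ℕ} (hσ : MemPi L k t σ) (htR : ∀ c, 1 ≤ c → c ≤ L → t c ≤ R)
    {i : ℕ} (hi : i ∈ Icc 1 k) (hσi : σ i ≠ 0) : relLoc σ i ≤ R := by
  obtain ⟨hi1, hik⟩ := mem_Icc.mp hi
  calc relLoc σ i ≤ #{x ∈ Icc 1 k | σ x = σ i} := relLoc_le_card_filter σ hik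
    _ = t (σ i) := hσ.2 _ (hσ.1 i hi1 hik)
    _ ≤ R := htR _ (Nat.one_le_iff_ne_zero.mpr hσi) (hσ.1 i hi1 hik)

theorem MemPi.card_filter_lt_relLoc (hσ : MemPi L k t σ) (ht0 : t 0 = 1) (hj : j ∈ Icc 1 k)
    (hσj : σ j = 0) (v : ℕ) :
    #{i ∈ (Icc 1 k).erase j | v < relLoc σ i} = ∑ c ∈ Icc 1 L, (t c - v) := by
  have hmaps : Set.MapsTo σ ↑{i ∈ (Icc 1 k).erase j | v < relLoc σ i} ↑(Icc 1 L) := by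
    intro i hi
    obtain ⟨hiE, -⟩ := mem_filter.mp hi
    obtain ⟨hi1, hik⟩ := mem_Icc.mp (mem_of_mem_erase hiE)
    exact mem_Icc.mpr
      ⟨Nat.one_le_iff_ne_zero.mpr (hσ.apply_ne_zero ht0 hj hσj hiE), hσ.1 i hi1 hik⟩
  rw [card_eq_sum_card_fiberwise hmaps]
  refine sum_congr rfl fun c hc => ?_
  rw [← hσ.2 c (mem_Icc.mp hc).2, ← card_filter_eq_and_lt_relLoc]
  congr 1
  ext i
  simp only [mem_filter, mem_erase]
  constructor
  · rintro ⟨⟨⟨-, hi⟩, hv⟩, rfl⟩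
    exact ⟨hi, rfl, hv⟩
  · rintro ⟨hi, rfl, hv⟩
    refine ⟨⟨⟨fun hij => ?_, hi⟩, hv⟩, rfl⟩
    rw [hij, hσj] at hc
    simp at hc

end MemPi

theorem IsDist.sum_Icc_one {L R k : ℕ} {s : ℕ → ℕ} (hs : IsDist L R k s) :
    s 0 + ∑ c ∈ Icc 1 L, s c = k := by
  rw [← hs.2.2, range_eq_Ico, sum_eq_sum_Ico_succ_bot (by omega : 0 < L + 1), zero_add,
    Ico_add_one_right_eq_Icc]

theorem sStar1_zero (R k : ℕ) : sStar1 R k 0 = 1 := rfl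

theorem sStar1_le {R : ℕ} (hR : 0 < R) (k : ℕ) {c : ℕ} (hc : 1 ≤ c) : sStar1 R k c ≤ R := by
  have := Nat.mod_add_div' (k - 1) R
  have := Nat.mod_lt (k - 1) hR
  unfold sStar1
  split_ifs <;> omega

theorem sum_sStar1_tsub {L R k : ℕ} (hR : 0 < R) (hk : k - 1 ≤ L * R) (w : ℕ) :
    ∑ c ∈ Icc 1 L, (sStar1 R k c - w) = (k - 1) / R * (R - w) + ((k - 1) % R - w) := by
  obtain ⟨q, r, hq, hr, hqr, hrR⟩ : ∃ q r, (k - 1) / R = q ∧ (k - 1) % R = r ∧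
      r + q * R = k - 1 ∧ r < R :=
    ⟨_, _, rfl, rfl, Nat.mod_add_div' _ _, Nat.mod_lt _ hR⟩
  have hqL : q ≤ L := Nat.le_of_mul_le_mul_right (by omega) hR
  have hpoint : ∀ c ∈ Icc 1 L, sStar1 R k c - w =
      (if c ≤ q then R - w else 0) + (if c = q + 1 then r - w else 0) := by
    intro c hc
    have := (mem_Icc.mp hc).1
    simp only [sStar1, hq]
    split_ifs <;> omega
  have hfilter : {c ∈ Icc 1 L | c ≤ q} = Icc 1 q := by
    ext c
    simp only [mem_filter, mem_Icc]
    omega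
  rw [sum_congr rfl hpoint, sum_add_distrib, ← sum_filter, sum_const, smul_eq_mul, sum_ite_eq',
    hfilter, Nat.card_Icc, Nat.add_sub_cancel, hq, hr]
  split_ifs with h
  · rfl
  · have hqL' : q = L := by simp only [mem_Icc] at h; omega
    subst hqL'
    have hr0 : r = 0 := by omega
    rw [hr0, Nat.zero_sub]

section CappedWeight

variable (dI dC : ℕ) (βI βC α : ℝ)

/-- `weight` at a cluster position `i` whose relative location is `h`. -/
noncomputable def clusterWeight (i h : ℕ) : ℝ :=
  ((dI + 1 - h : ℕ) : ℝ) * βI + ((dC - (i - h) : ℕ) : ℝ) * βC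

noncomputable def cappedWeight (i h : ℕ) : ℝ :=
  min α (clusterWeight dI dC βI βC i h)

noncomputable def cappedWeightDrop (i v : ℕ) : ℝ :=
  cappedWeight dI dC βI βC α i v - cappedWeight dI dC βI βC α i (v + 1)

variable {dI dC βI βC α}

theorem weight_eq_clusterWeight {σ : ℕ → ℕ} {i : ℕ} (hσi : σ i ≠ 0) :
    weight dI dC βI βC σ i = clusterWeight dI dC βI βC i (relLoc σ i) := by
  rw [weight, if_neg hσi, aCoef, bCoef, clusterWeight]

theorem clusterWeight_succ_le (hβ : βC ≤ βI) (hβC : 0 ≤ βC) (i : ℕ) {v : ℕ} (hv : v ≤ dI) :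
    clusterWeight dI dC βI βC i (v + 1) ≤ clusterWeight dI dC βI βC i v := by
  have ha : ((dI + 1 - v : ℕ) : ℝ) = ((dI + 1 - (v + 1) : ℕ) : ℝ) + 1 := by
    exact_mod_cast (by omega : dI + 1 - v = dI + 1 - (v + 1) + 1)
  have hb : ((dC - (i - (v + 1)) : ℕ) : ℝ) ≤ ((dC - (i - v) : ℕ) : ℝ) + 1 := by
    exact_mod_cast (by omega : dC - (i - (v + 1)) ≤ dC - (i - v) + 1)
  unfold clusterWeight
  rw [ha]
  nlinarith

theorem clusterWeight_antitone_left (hβC : 0 ≤ βC) {i i' : ℕ} (hii' : i ≤ i') (h : ℕ) :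
    clusterWeight dI dC βI βC i' h ≤ clusterWeight dI dC βI βC i h := by
  unfold clusterWeight
  gcongr

theorem clusterWeight_sub_succ_le (hβC : 0 ≤ βC) {i i' v : ℕ} (hvi : v < i) (hii' : i ≤ i') :
    clusterWeight dI dC βI βC i v - clusterWeight dI dC βI βC i (v + 1) ≤
      clusterWeight dI dC βI βC i' v - clusterWeight dI dC βI βC i' (v + 1) := by
  have hb : ((dC - (i - v) : ℕ) : ℝ) + ((dC - (i' - (v + 1)) : ℕ) : ℝ) ≤
      ((dC - (i' - v) : ℕ) : ℝ) + ((dC - (i - (v + 1)) : ℕ) : ℝ) := by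
    exact_mod_cast (by omega : dC - (i - v) + (dC - (i' - (v + 1))) ≤
      dC - (i' - v) + (dC - (i - (v + 1))))
  unfold clusterWeight
  nlinarith

theorem cappedWeightDrop_nonneg (hβ : βC ≤ βI) (hβC : 0 ≤ βC) (i : ℕ) {v : ℕ} (hv : v ≤ dI) :
    0 ≤ cappedWeightDrop dI dC βI βC α i v :=
  sub_nonneg.mpr (min_le_min_left α (clusterWeight_succ_le hβ hβC i hv))

theorem cappedWeightDrop_le (hβ : βC ≤ βI) (hβC : 0 ≤ βC) {i i' v : ℕ} (hv : v ≤ dI)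
    (hvi : v < i) (hii' : i ≤ i') :
    cappedWeightDrop dI dC βI βC α i v ≤ cappedWeightDrop dI dC βI βC α i' v :=
  min_sub_min_le_min_sub_min (clusterWeight_succ_le hβ hβC i hv)
    (clusterWeight_antitone_left hβC hii' _) (clusterWeight_sub_succ_le hβC hvi hii')

theorem cappedWeight_eq_sub_sum (i : ℕ) {h : ℕ} (hh1 : 1 ≤ h) (hh : h ≤ dI + 1) :
    cappedWeight dI dC βI βC α i h = cappedWeight dI dC βI βC α i 1 -
      ∑ v ∈ Icc 1 dI, if v < h then cappedWeightDrop dI dC βI βC α i v else 0 := by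
  have hfilter : {v ∈ Icc 1 dI | v < h} = Ico 1 h := by
    ext v
    simp only [mem_filter, mem_Icc, mem_Ico]
    omega
  have htel := sum_Ico_sub (cappedWeight dI dC βI βC α i) hh1
  rw [← sum_filter, hfilter]
  simp only [cappedWeightDrop]
  rw [sum_sub_distrib] at htel ⊢
  linarith

theorem sum_cappedWeight_relLoc {σ : ℕ → ℕ} {E : Finset ℕ}
    (hE : ∀ i ∈ E, 1 ≤ relLoc σ i ∧ relLoc σ i ≤ dI + 1) :
    ∑ i ∈ E, cappedWeight dI dC βI βC α i (relLoc σ i) = ∑ i ∈ E, cappedWeight dI dC βI βC α i 1 -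
      ∑ v ∈ Icc 1 dI, ∑ i ∈ E with v < relLoc σ i, cappedWeightDrop dI dC βI βC α i v := by
  simp only [sum_filter]
  rw [sum_congr rfl fun i hi => cappedWeight_eq_sub_sum i (hE i hi).1 (hE i hi).2,
    sum_sub_distrib, sum_comm]

end CappedWeight

theorem MC_eq_sub_sum_cappedWeightDrop {L k dI dC : ℕ} {βI βC α : ℝ} {t σ : ℕ → ℕ} {j : ℕ}
    (hσ : MemPi L k t σ) (ht0 : t 0 = 1) (htR : ∀ c, 1 ≤ c → c ≤ L → t c ≤ dI + 1)
    (hj : j ∈ Icc 1 k) (hσj : σ j = 0) :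
    MC k dI dC βI βC α σ = min α (weight dI dC βI βC σ j) +
      (∑ i ∈ (Icc 1 k).erase j, cappedWeight dI dC βI βC α i 1 -
        ∑ v ∈ Icc 1 dI, ∑ i ∈ (Icc 1 k).erase j with v < relLoc σ i,
          cappedWeightDrop dI dC βI βC α i v) := by
  have hσi : ∀ i ∈ (Icc 1 k).erase j, σ i ≠ 0 := fun _ => hσ.apply_ne_zero ht0 hj hσj
  rw [MC, ← add_sum_erase _ _ hj, ← sum_cappedWeight_relLoc fun i hi =>
    ⟨one_le_relLoc σ (mem_Icc.mp (mem_of_mem_erase hi)).1,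
      hσ.relLoc_le htR (mem_of_mem_erase hi) (hσi i hi)⟩]
  congr 1
  exact sum_congr rfl fun i hi => by rw [weight_eq_clusterWeight (hσi i hi), cappedWeight]

theorem IsVerticalOrder.lt_of_relLoc_lt {L k : ℕ} {t σ : ℕ → ℕ} (hσ : IsVerticalOrder L k t σ)
    {b u : ℕ} (hb : b ∈ Icc 1 k) (hu : u ∈ Icc 1 k) (hσb : σ b ≠ 0) (hσu : σ u ≠ 0)
    (hlt : relLoc σ b < relLoc σ u) : b < u := by
  by_contra! hub
  obtain rfl | hub := hub.eq_or_lt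
  · exact hlt.false
  · exact (hσ.2 u b (mem_Icc.mp hu).1 hub (mem_Icc.mp hb).2 hσu hσb).1.not_gt hlt

theorem sum_cappedWeightDrop_le_of_isVerticalOrder {L k dI dC : ℕ} {βI βC α : ℝ}
    (hβ : βC ≤ βI) (hβC : 0 ≤ βC) {t π σ : ℕ → ℕ} {j : ℕ} (hσ : IsVerticalOrder L k t σ)
    (ht0 : t 0 = 1) (hj : j ∈ Icc 1 k) (hσj : σ j = 0) {v : ℕ} (hv : v ≤ dI)
    (hcard : #{i ∈ (Icc 1 k).erase j | v < relLoc π i} ≤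
      #{i ∈ (Icc 1 k).erase j | v < relLoc σ i}) :
    ∑ i ∈ (Icc 1 k).erase j with v < relLoc π i, cappedWeightDrop dI dC βI βC α i v ≤
      ∑ i ∈ (Icc 1 k).erase j with v < relLoc σ i, cappedWeightDrop dI dC βI βC α i v := by
  refine sum_le_sum_of_card_le_of_le_of_mem_sdiff hcard
    (fun u _ => cappedWeightDrop_nonneg hβ hβC u hv) fun b hb u hu => ?_
  simp only [mem_sdiff, mem_filter, not_and, not_lt] at hb hu
  obtain ⟨⟨hbE, hvb⟩, hbσ⟩ := hb
  obtain ⟨⟨huE, hvu⟩, -⟩ := hu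
  have hbu : b < u := hσ.lt_of_relLoc_lt (mem_of_mem_erase hbE) (mem_of_mem_erase huE)
    (hσ.1.apply_ne_zero ht0 hj hσj hbE) (hσ.1.apply_ne_zero ht0 hj hσj huE)
    ((hbσ hbE).trans_lt hvu)
  exact cappedWeightDrop_le hβ hβC hv (hvb.trans_le (relLoc_le_self π b)) hbu.le

theorem stmt4_general (L R k dI dC : ℕ) (βI βC α : ℝ)
    (hR : 2 ≤ R)
    (hdI : dI = R - 1)
    (hβ : βC ≤ βI) (hβC : 0 < βC)
    (hk1LR : k - 1 ≤ L * R)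
    (j : ℕ) (hj1 : 1 ≤ j) (hjk : j ≤ k)
    (πj : ℕ → ℕ) (hπj : IsPiJ L R k j πj)
    (s : ℕ → ℕ) (hs : IsDist L R k s) (hs0 : s 0 = 1)
    (π : ℕ → ℕ) (hπ : MemPi L k s π) (hπ0 : π j = 0) :
    MC k dI dC βI βC α πj ≤ MC k dI dC βI βC α π := by
  obtain ⟨hπj0, hπjv⟩ := hπj
  have hj : j ∈ Icc 1 k := mem_Icc.mpr ⟨hj1, hjk⟩
  have hcard : ∀ v, #{i ∈ (Icc 1 k).erase j | v < relLoc π i} ≤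
      #{i ∈ (Icc 1 k).erase j | v < relLoc πj i} := fun v => by
    rw [hπ.card_filter_lt_relLoc hs0 hj hπ0,
      hπjv.1.card_filter_lt_relLoc (sStar1_zero R k) hj hπj0, sum_sStar1_tsub (by omega) hk1LR]
    exact Nat.sum_tsub_le_of_le_of_sum_le
      (fun c hc => hs.2.1 c (mem_Icc.mp hc).1 (mem_Icc.mp hc).2)
      (by have := hs.sum_Icc_one; omega) v
  rw [MC_eq_sub_sum_cappedWeightDrop hπjv.1 (sStar1_zero R k)
      (fun c hc _ => (sStar1_le (by omega) k hc).trans (by omega)) hj hπj0,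
    MC_eq_sub_sum_cappedWeightDrop hπ hs0 (fun c hc hcL => (hs.2.1 c hc hcL).trans (by omega))
      hj hπ0,
    weight, weight, if_pos hπj0, if_pos hπ0]
  refine add_le_add_right (sub_le_sub_left (sum_le_sum fun v hv => ?_) _) _
  exact sum_cappedWeightDrop_le_of_isVerticalOrder hβ hβC.le hπjv (sStar1_zero R k) hj hπj0
    (mem_Icc.mp hv).2 (hcard v)

/-- with one separate selected node fixed at location `j`, the cluster order
`π^(j)` produced by Algorithms 1 and 2 minimizes the min-cut among all cluster orders in
`Π(s)` (with `s_0 = 1`) whose separate entry is at position `j`. -/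
theorem stmt4 (L R k dI dC : ℕ) (βI βC α : ℝ)
    (hL : 1 ≤ L) (hR : 2 ≤ R) (hk : 2 ≤ k)
    (hdI : dI = R - 1) (hdC : 1 ≤ dC) (hkd : k ≤ dI + dC)
    (hβ : βC ≤ βI) (hβC : 0 < βC) (hα : 0 < α)
    (hk1LR : k - 1 ≤ L * R)
    (j : ℕ) (hj1 : 1 ≤ j) (hjk : j ≤ k)
    (πj : ℕ → ℕ) (hπj : IsPiJ L R k j πj)
    (s : ℕ → ℕ) (hs : IsDist L R k s) (hs0 : s 0 = 1)
    (π : ℕ → ℕ) (hπ : MemPi L k s π) (hπ0 : π j = 0) :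
    MC k dI dC βI βC α πj ≤ MC k dI dC βI βC α π :=
  stmt4_general L R k dI dC βI βC α hR hdI hβ hβC hk1LR j hj1 hjk πj hπj s hs hs0 π hπ hπ0
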